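/- arXiv:2601.05108 — 2 statements merged into one kernel-verified Lean document; each statement's English description precedes it below -/
import Mathlib

section
/- For stratified evaluation: let P = P^1 ∪ ... ∪ P^n be a partition of a normal program according to a stratification ξ (positive dependencies non-increasing, negative dependencies strictly increasing in stratum), and define A_0 = D and A_i = least model of the reduct of P^i with respect to A_{i-1} over A_{i-1}. Then A_n is closed under the reduct of P with respect to A_n; i.e., the stratified fixpoint is a model of its own reduct. -/
/-- A ground normal rule: positive body atoms, negated body atoms, and a head. -/
structure NRule (U : Type*) where
  pos : Set U
  neg : Set U
  head : U

/-- `N` is closed under the reduct of `G` with respect to `S`: for every rule of `G`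
none of whose negated atoms is in `S`, if its positive body is in `N` then so is
its head. -/
def ClosedReduct {U : Type*} (G : Set (NRule U)) (S N : Set U) : Prop :=
  ∀ r ∈ G, r.neg ∩ S = ∅ → r.pos ⊆ N → r.head ∈ N

/-- The least model of the reduct of `G` with respect to `S` over the facts `D`. -/
def lmReduct {U : Type*} (G : Set (NRule U)) (S D : Set U) : Set U :=
  ⋂₀ {N | D ⊆ N ∧ ClosedReduct G S N}

/-- The stratified fixpoint sequence: `A 0 = D` and `A (i+1)` is the least model of
the reduct of stratum `i+1` with respect to `A i` over `A i`. -/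
def chain {U : Type*} (Pstrat : ℕ → Set (NRule U)) (D : Set U) : ℕ → Set U
  | 0 => D
  | i + 1 => lmReduct (Pstrat (i + 1)) (chain Pstrat D i) (chain Pstrat D i)

lemma subset_lmReduct {U : Type*} (G : Set (NRule U)) (S D : Set U) :
    D ⊆ lmReduct G S D := fun x hx => Set.mem_sInter.mpr (fun _ hN => hN.1 hx)

lemma lmReduct_subset {U : Type*} {G : Set (NRule U)} {S D N : Set U}
    (h1 : D ⊆ N) (h2 : ClosedReduct G S N) : lmReduct G S D ⊆ N :=
  fun x hx => Set.mem_sInter.mp hx N ⟨h1, h2⟩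

lemma closed_lmReduct {U : Type*} (G : Set (NRule U)) (S D : Set U) :
    ClosedReduct G S (lmReduct G S D) := by
  intro r hr hn hp
  exact Set.mem_sInter.mpr (fun N hN => hN.2 r hr hn (fun x hx => Set.mem_sInter.mp (hp hx) N hN))

lemma chain_mono {U : Type*} (Pstrat : ℕ → Set (NRule U)) (D : Set U) {i j : ℕ}
    (h : i ≤ j) : chain Pstrat D i ⊆ chain Pstrat D j := by
  induction j with
  | zero => simpa [Nat.le_zero.mp h]
  | succ j ih =>
    rcases Nat.lt_or_ge i (j+1) with hlt | hge
    · exact (ih (Nat.lt_succ_iff.mp hlt)).trans (subset_lmReduct _ _ _)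
    · have : i = j + 1 := le_antisymm h hge
      simp [this]

lemma chain_level {ι τ : Type*} (P : Set (NRule (ι × τ))) (D : Set (ι × τ))
    (ξ : ι → ℕ) (k : ℕ) : ∀ n, k ≤ n →
    chain (fun i => {r ∈ P | ξ r.head.1 = i}) D n ⊆
      chain (fun i => {r ∈ P | ξ r.head.1 = i}) D k ∪ {x | k < ξ x.1} := by
  intro n
  induction n with
  | zero => intro h; simp [Nat.le_zero.mp h]
  | succ n ih =>
    intro h
    rcases Nat.lt_or_ge k (n+1) with hlt | hge
    · have ihn := ih (Nat.lt_succ_iff.mp hlt)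
      show lmReduct _ _ _ ⊆ _
      refine lmReduct_subset ihn ?_
      intro r hr _ _
      exact Or.inr (show k < ξ r.head.1 from hr.2 ▸ hlt)
    · have : k = n + 1 := le_antisymm h hge
      subst this
      exact fun x hx => Or.inl hx

/-- For a stratification `ξ` of a normal program `P` (facts are predicate–tuple
pairs; positive dependencies non-increasing, negative dependencies strictly
increasing; head levels in `{1,…,n}`), the stratified fixpoint `A n` is closed under
the reduct of `P` with respect to `A n`. -/
theorem stmt16 {ι τ : Type*} (P : Set (NRule (ι × τ))) (D : Set (ι × τ))
    (ξ : ι → ℕ) (n : ℕ)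
    (hlevel : ∀ r ∈ P, 1 ≤ ξ r.head.1 ∧ ξ r.head.1 ≤ n)
    (hpos : ∀ r ∈ P, ∀ b ∈ r.pos, ξ b.1 ≤ ξ r.head.1)
    (hneg : ∀ r ∈ P, ∀ b ∈ r.neg, ξ b.1 < ξ r.head.1) :
    ClosedReduct P (chain (fun i => {r ∈ P | ξ r.head.1 = i}) D n)
      (chain (fun i => {r ∈ P | ξ r.head.1 = i}) D n) := by
  intro r hr hnegA hposA
  set f : ℕ → Set (NRule (ι × τ)) := fun i => {r ∈ P | ξ r.head.1 = i} with hf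
  obtain ⟨h1, h2⟩ := hlevel r hr
  obtain ⟨m, hm⟩ : ∃ m, ξ r.head.1 = m + 1 := ⟨ξ r.head.1 - 1, (Nat.succ_pred_eq_of_pos h1).symm⟩
  have hrf : r ∈ f (m + 1) := ⟨hr, hm⟩
  have hmn : m + 1 ≤ n := hm ▸ h2
  have hsub : chain f D (m+1) ⊆ chain f D n := chain_mono f D hmn
  have hclosed : ClosedReduct (f (m+1)) (chain f D m) (chain f D (m+1)) :=
    closed_lmReduct _ _ _
  have hneg' : r.neg ∩ chain f D m = ∅ := by
    have hmn' : m ≤ n := Nat.le_of_succ_le hmn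
    have : r.neg ∩ chain f D m ⊆ r.neg ∩ chain f D n :=
      Set.inter_subset_inter_right _ (chain_mono f D hmn')
    exact Set.subset_empty_iff.mp (hnegA ▸ this)
  have hpos' : r.pos ⊆ chain f D (m+1) := by
    intro x hx
    have hxl : ξ x.1 ≤ m + 1 := hm ▸ hpos r hr x hx
    rcases chain_level P D ξ (m+1) n hmn (hposA hx) with h | h
    · exact h
    · exact absurd hxl (not_le.mpr h)
  exact hsub (hclosed r hrf hneg' hpos')
end

section
/- If A is a stable model of a ground normal program G with facts D (i.e., A is the least model of reduct(G, A) over D), and B is another stable model with B ⊆ A, then B = A: stable models of a ground normal program are pairwise incomparable under inclusion. -/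
/-- `A` is a stable model of `G` with database `D`: `A` equals the least set
containing `D` and closed under the reduct of `G` with respect to `A`. -/
def IsStable {U : Type*} (G : Set (NRule U)) (D A : Set U) : Prop :=
  A = lmReduct G A D

/-- Stable models are pairwise incomparable under inclusion. -/
theorem stmt18 {U : Type*} (G : Set (NRule U)) (D A B : Set U)
    (hA : IsStable G D A) (hB : IsStable G D B) (hBA : B ⊆ A) : B = A := by
  refine Set.Subset.antisymm hBA ?_
  -- It suffices that B is in the set whose intersection defines lmReduct G A D
  have hDB : D ⊆ B := by
    rw [hB]; intro x hx N hN; exact hN.1 hx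
  have hClosB : ClosedReduct G B B := by
    intro r hr hneg hpos
    rw [hB] at hpos ⊢
    intro N hN
    exact hN.2 r hr hneg (fun x hx => hpos hx N hN)
  have hClosAB : ClosedReduct G A B := by
    intro r hr hneg hpos
    have : r.neg ∩ B = ∅ := by
      apply Set.eq_empty_of_subset_empty
      intro x ⟨hx1, hx2⟩
      rw [← hneg]; exact ⟨hx1, hBA hx2⟩
    exact hClosB r hr this hpos
  rw [hA]
  intro x hx
  exact hx B ⟨hDB, hClosAB⟩
end
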